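/- arXiv:1102.2418 — 3 statements merged into one kernel-verified Lean document; each statement's English description precedes it below -/
import Mathlib

section
/- The Lax equation admits a spectral parameter: if A : I → M_N(ℝ) is a differentiable curve on an interval I satisfying Ȧ(t) = [A(t), B(A(t))], then for every z ∈ ℂ the curve X(t) = A(t) − z M_y satisfies d/dt X(t) = [X(t), B(A(t)) + z M_f]. -/
open Matrix BigOperators Finset

/-- The commutator of two real `N × N` matrices. -/
def matComm {N : ℕ} (A B : Matrix (Fin N) (Fin N) ℝ) : Matrix (Fin N) (Fin N) ℝ :=
  A * B - B * A

/-- The commutator of two complex `N × N` matrices. -/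
noncomputable def matCommC {N : ℕ} (A B : Matrix (Fin N) (Fin N) ℂ) : Matrix (Fin N) (Fin N) ℂ :=
  A * B - B * A

/-- The Rankine–Hugoniot multiplier matrix. -/
noncomputable def Fmat {N : ℕ} (u : Fin N → ℝ) (f : ℝ → ℝ) :
    Matrix (Fin N) (Fin N) ℝ :=
  Matrix.of fun i j =>
    if i = j then -(deriv f (u i)) else -((f (u i) - f (u j)) / (u i - u j))

/-- The Markov prescription: `B(A)_{ij} = F_{ij} A_{ij}` off the diagonal and
`B(A)_{ii} = -∑_{j ≠ i} B(A)_{ij}`. -/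
noncomputable def BofA {N : ℕ} (u : Fin N → ℝ) (f : ℝ → ℝ)
    (A : Matrix (Fin N) (Fin N) ℝ) : Matrix (Fin N) (Fin N) ℝ :=
  Matrix.of fun i j =>
    if i = j then -∑ k ∈ Finset.univ.filter (fun k => k ≠ i), Fmat u f i k * A i k
    else Fmat u f i j * A i j

/-- Entrywise complexification of a real matrix. -/
noncomputable def toC {N : ℕ} (A : Matrix (Fin N) (Fin N) ℝ) : Matrix (Fin N) (Fin N) ℂ :=
  A.map (fun x : ℝ => (x : ℂ))

/-! Expanding in `z`, `[A - z M_y, B + z M_f] = [A, B] + z ([A, M_f] - [M_y, B]) - z² [M_y, M_f]`.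
The `z²` term vanishes because diagonal matrices commute, and the `z` term vanishes because
`B(A)` is built from the divided differences of `f`: off the diagonal, `[M_y, B(A)]_ij` and
`[A, M_f]_ij` both equal `(f(u_j) - f(u_i)) A_ij`. So `X` has the same derivative as `A`. -/

theorem commutator_sub_smul_add_smul {S R : Type*} [CommRing S] [Ring R] [Algebra S R]
    {A B D E : R} (hcross : A * E - E * A = D * B - B * D) (hDE : D * E = E * D) (z : S) :
    (A - z • D) * (B + z • E) - (B + z • E) * (A - z • D) = A * B - B * A := by
  have expand : (A - z • D) * (B + z • E) - (B + z • E) * (A - z • D)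
      = (A * B - B * A) + z • ((A * E - E * A) - (D * B - B * D)) - (z * z) • (D * E - E * D) := by
    simp only [sub_mul, mul_sub, add_mul, mul_add, smul_mul_assoc, mul_smul_comm, smul_smul,
      smul_sub, smul_add]
    abel
  rw [expand, hcross, hDE]
  simp

theorem Fmat_of_ne {N : ℕ} (u : Fin N → ℝ) (f : ℝ → ℝ) {i j : Fin N} (h : i ≠ j) :
    Fmat u f i j = -slope f (u j) (u i) := by
  simp [Fmat, h, slope_def_field]

/-- The division in `Fmat` is harmless: `(u_i - u_j) • slope f u_j u_i = f u_i - f u_j` holds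
even when `u_i = u_j`. -/
theorem matComm_diagonal_eq_matComm_BofA {N : ℕ} (u : Fin N → ℝ) (f : ℝ → ℝ)
    (A : Matrix (Fin N) (Fin N) ℝ) :
    matComm A (diagonal (f ∘ u)) = matComm (diagonal u) (BofA u f A) := by
  ext i j
  simp only [matComm, Matrix.sub_apply, mul_diagonal, diagonal_mul, Function.comp_apply]
  by_cases h : i = j
  · subst h
    ring
  · have hslope := sub_smul_slope f (u j) (u i)
    simp only [BofA, of_apply, if_neg h, Fmat_of_ne u f h, smul_eq_mul, vsub_eq_sub] at hslope ⊢
    linear_combination A i j * hslope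

theorem toC_mul {N : ℕ} (P Q : Matrix (Fin N) (Fin N) ℝ) : toC (P * Q) = toC P * toC Q :=
  (Complex.ofRealHom.mapMatrix).map_mul P Q

theorem toC_matComm {N : ℕ} (P Q : Matrix (Fin N) (Fin N) ℝ) :
    toC (matComm P Q) = matCommC (toC P) (toC Q) := by
  simp only [matComm, matCommC, ← toC_mul]
  exact map_sub (Complex.ofRealHom.mapMatrix : Matrix (Fin N) (Fin N) ℝ →+* _) _ _

theorem toC_diagonal {N : ℕ} (d : Fin N → ℝ) :
    toC (diagonal d) = diagonal fun k => (d k : ℂ) :=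
  diagonal_map Complex.ofReal_zero

theorem spectral_parameter_general (N : ℕ) (u : Fin N → ℝ)
    (f : ℝ → ℝ) (I : Set ℝ) (A : ℝ → Matrix (Fin N) (Fin N) ℝ)
    (hA : ∀ t ∈ I, ∀ i j, HasDerivAt (fun s => A s i j)
      (matComm (A t) (BofA u f (A t)) i j) t) :
    ∀ z : ℂ, ∀ t ∈ I, ∀ i j,
      HasDerivAt
        (fun s => (toC (A s) - z • Matrix.diagonal (fun k => (u k : ℂ))) i j)
        ((matCommC (toC (A t) - z • Matrix.diagonal (fun k => (u k : ℂ)))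
          (toC (BofA u f (A t)) + z • Matrix.diagonal (fun k => (f (u k) : ℂ)))) i j)
        t := by
  intro z t ht i j
  have hcross := congrArg toC (matComm_diagonal_eq_matComm_BofA u f (A t))
  simp only [toC_matComm, toC_diagonal, Function.comp_apply] at hcross
  have hdiag : diagonal (fun k => (u k : ℂ)) * diagonal (fun k => (f (u k) : ℂ))
      = diagonal (fun k => (f (u k) : ℂ)) * diagonal (fun k => (u k : ℂ)) := by
    simp only [diagonal_mul_diagonal, mul_comm]
  rw [matCommC, commutator_sub_smul_add_smul hcross hdiag, ← matCommC, ← toC_matComm]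
  exact ((hA t ht i j).ofReal_comp).sub_const _

/-- The Lax equation admits a spectral parameter: any solution `Ȧ = [A, B(A)]`
gives, for each `z ∈ ℂ`, a solution `X(t) = A(t) - z M_y` of
`Ẋ = [X, B(A) + z M_f]`, where `M_y = diag(u)`, `M_f = diag(f ∘ u)`. -/
theorem spectral_parameter (N : ℕ) (u : Fin N → ℝ) (hu : StrictMono u)
    (f : ℝ → ℝ) (I : Set ℝ) (A : ℝ → Matrix (Fin N) (Fin N) ℝ)
    (hA : ∀ t ∈ I, ∀ i j, HasDerivAt (fun s => A s i j)
      (matComm (A t) (BofA u f (A t)) i j) t) :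
    ∀ z : ℂ, ∀ t ∈ I, ∀ i j,
      HasDerivAt
        (fun s => (toC (A s) - z • Matrix.diagonal (fun k => (u k : ℂ))) i j)
        ((matCommC (toC (A t) - z • Matrix.diagonal (fun k => (u k : ℂ)))
          (toC (BofA u f (A t)) + z • Matrix.diagonal (fun k => (f (u k) : ℂ)))) i j)
        t :=
  spectral_parameter_general N u f I A hA
end

section
/- The coefficients of the spectral curve are integrals of motion: if A : I → M_N(ℝ) is a differentiable solution of the Lax equation Ȧ = [A, B(A)] on an interval I, then for every z ∈ ℂ the characteristic polynomial λ ↦ det(A(t) − z M_y − λ·Id) is independent of t; equivalently, Tr((A(t) − z M_y)^k) is constant in t for every z ∈ ℂ and every positive integer k. -/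
/-! With `M_f = diag (f (u_i))`, the prescription `B(A)_ij = F_ij A_ij` is exactly what makes
`[M_y, B(A)] = [A, M_f]`; since `M_y` and `M_f` commute, `L = A - z M_y` and
`M = B(A) + z M_f` form a Lax pair `L̇ = [L, M]` for every `z`. Along a Lax flow
`d/dt tr L^k = tr [L^k, M] = 0`, and by Jacobi's formula
`d/dt det (L - λ) = tr (adj (L - λ) [L - λ, M]) = 0`. -/

open Matrix BigOperators Finset

theorem Set.OrdConnected.eq_of_hasDerivAt_eq_zero {E : Type*} [NormedAddCommGroup E]
    [NormedSpace ℝ E] {f : ℝ → E} {s : Set ℝ} (hs : s.OrdConnected)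
    (hf : ∀ x ∈ s, HasDerivAt f 0 x) {x y : ℝ} (hx : x ∈ s) (hy : y ∈ s) : f x = f y := by
  have h := hs.convex.norm_image_sub_le_of_norm_hasDerivWithin_le
    (fun x hx => (hf x hx).hasDerivWithinAt) (fun _ _ => norm_zero.le) hx hy
  rw [zero_mul, norm_le_zero_iff, sub_eq_zero] at h
  exact h.symm

theorem commutator_sub_smul_add_smul_s9 {S R : Type*} [CommRing S] [Ring R] [Algebra S R]
    (z : S) {a b d e : R} (hdb : d * b - b * d = a * e - e * a) (hde : Commute d e) :
    (a - z • d) * (b + z • e) - (b + z • e) * (a - z • d) = a * b - b * a := by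
  have expand : (a - z • d) * (b + z • e) - (b + z • e) * (a - z • d)
      = a * b - b * a + z • ((a * e - e * a) - (d * b - b * d)) - (z * z) • (d * e - e * d) := by
    simp only [mul_sub, sub_mul, mul_add, add_mul, smul_mul_assoc, mul_smul_comm, smul_sub,
      smul_smul, smul_add]
    abel
  rw [expand, hdb, hde.eq]
  simp

namespace Matrix

variable {n : Type*} [Fintype n] [DecidableEq n] {R : Type*} [CommRing R]

theorem trace_adjugate_mul_commutator (X M : Matrix n n R) :
    (adjugate X * (X * M - M * X)).trace = 0 := by
  rw [mul_sub, trace_sub, ← Matrix.mul_assoc, adjugate_mul, trace_mul_comm (adjugate X),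
    Matrix.mul_assoc, mul_adjugate, sub_eq_zero]
  simp

theorem trace_adjugate_mul_eq_sum_det_updateCol (X Y : Matrix n n R) :
    (adjugate X * Y).trace = ∑ i, (X.updateCol i fun r => Y r i).det := by
  refine Finset.sum_congr rfl fun i _ => ?_
  rw [← cramer_apply, cramer_eq_adjugate_mulVec]
  simp [mulVec, dotProduct, mul_apply]

end Matrix

section EntrywiseDeriv

variable {𝕜 : Type*} [NontriviallyNormedField 𝕜] {𝔸 : Type*} [NormedCommRing 𝔸]
  [NormedAlgebra 𝕜 𝔸] {l m n : Type*}

/-- Matrices carry no global norm in Mathlib, so curves of matrices are differentiated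
entrywise. -/
def HasEntrywiseDerivAt (X : 𝕜 → Matrix m n 𝔸) (X' : Matrix m n 𝔸) (t : 𝕜) : Prop :=
  ∀ i j, HasDerivAt (fun s => X s i j) (X' i j) t

namespace HasEntrywiseDerivAt

variable {X : 𝕜 → Matrix m n 𝔸} {X' : Matrix m n 𝔸} {t : 𝕜}

theorem sub_const (h : HasEntrywiseDerivAt X X' t) (C : Matrix m n 𝔸) :
    HasEntrywiseDerivAt (fun s => X s - C) X' t :=
  fun i j => (h i j).sub_const (C i j)

theorem mul [Fintype m] {Y : 𝕜 → Matrix l m 𝔸} {Y' : Matrix l m 𝔸}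
    (hY : HasEntrywiseDerivAt Y Y' t) (hX : HasEntrywiseDerivAt X X' t) :
    HasEntrywiseDerivAt (fun s => Y s * X s) (Y' * X t + Y t * X') t := fun i j => by
  simp only [Matrix.mul_apply, Matrix.add_apply, ← Finset.sum_add_distrib]
  exact HasDerivAt.fun_sum fun k _ => (hY i k).mul (hX k j)

theorem trace [Fintype n] {X : 𝕜 → Matrix n n 𝔸} {X' : Matrix n n 𝔸}
    (h : HasEntrywiseDerivAt X X' t) : HasDerivAt (fun s => (X s).trace) X'.trace t :=
  HasDerivAt.fun_sum fun i _ => h i i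

theorem det [Fintype n] [DecidableEq n] {X : 𝕜 → Matrix n n 𝔸} {X' : Matrix n n 𝔸}
    (h : HasEntrywiseDerivAt X X' t) :
    HasDerivAt (fun s => (X s).det) (Matrix.adjugate (X t) * X').trace t := by
  have hprod (σ : Equiv.Perm n) : HasDerivAt (fun s => ∏ i, X s (σ i) i)
      (∑ i, (∏ j ∈ Finset.univ.erase i, X t (σ j) j) • X' (σ i) i) t :=
    HasDerivAt.fun_finsetProd fun i _ => h (σ i) i
  simp only [Matrix.trace_adjugate_mul_eq_sum_det_updateCol, Matrix.det_apply']
  refine (HasDerivAt.fun_sum fun σ _ =>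
    (hprod σ).const_mul ((Equiv.Perm.sign σ : ℤ) : 𝔸)).congr_deriv ?_
  rw [Finset.sum_comm]
  refine Finset.sum_congr rfl fun σ _ => ?_
  rw [Finset.mul_sum]
  refine Finset.sum_congr rfl fun i _ => ?_
  rw [← Finset.mul_prod_erase _ _ (Finset.mem_univ i), smul_eq_mul, mul_comm _ (X' (σ i) i)]
  congr 2
  · simp
  · exact Finset.prod_congr rfl fun j hj => by
      simp [(Finset.mem_erase.mp hj).1]

end HasEntrywiseDerivAt

section Lax

variable [Fintype n] [DecidableEq n] {X : 𝕜 → Matrix n n 𝔸} {M : Matrix n n 𝔸} {t : 𝕜}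

theorem HasEntrywiseDerivAt.pow_of_lax (h : HasEntrywiseDerivAt X (X t * M - M * X t) t)
    (k : ℕ) : HasEntrywiseDerivAt (fun s => X s ^ k) (X t ^ k * M - M * X t ^ k) t := by
  induction k with
  | zero =>
    intro i j
    simpa using hasDerivAt_const t ((1 : Matrix n n 𝔸) i j)
  | succ k ih =>
    have leibniz : X t ^ (k + 1) * M - M * X t ^ (k + 1)
        = (X t ^ k * M - M * X t ^ k) * X t + X t ^ k * (X t * M - M * X t) := by
      rw [pow_succ]; noncomm_ring
    rw [leibniz]
    simpa only [pow_succ] using ih.mul h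

theorem HasEntrywiseDerivAt.sub_smul_one_of_lax
    (h : HasEntrywiseDerivAt X (X t * M - M * X t) t) (c : 𝔸) :
    HasEntrywiseDerivAt (fun s => X s - c • 1) ((X t - c • 1) * M - M * (X t - c • 1)) t := by
  have hcomm : (X t - c • 1) * M - M * (X t - c • 1) = X t * M - M * X t := by
    simp only [sub_mul, mul_sub, smul_mul_assoc, mul_smul_comm, one_mul, mul_one]
    abel
  rw [hcomm]
  exact h.sub_const _

theorem HasEntrywiseDerivAt.hasDerivAt_trace_pow_of_lax
    (h : HasEntrywiseDerivAt X (X t * M - M * X t) t) (k : ℕ) :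
    HasDerivAt (fun s => (X s ^ k).trace) 0 t := by
  simpa [Matrix.trace_sub, Matrix.trace_mul_comm (X t ^ k)] using (h.pow_of_lax k).trace

theorem HasEntrywiseDerivAt.hasDerivAt_det_of_lax
    (h : HasEntrywiseDerivAt X (X t * M - M * X t) t) :
    HasDerivAt (fun s => (X s).det) 0 t := by
  simpa [Matrix.trace_adjugate_mul_commutator] using h.det

end Lax

end EntrywiseDeriv

section LaxPair

variable {N : ℕ} {u : Fin N → ℝ} (f : ℝ → ℝ) (A : Matrix (Fin N) (Fin N) ℝ)

theorem diagonal_mul_BofA_sub_BofA_mul_diagonal (hu : Function.Injective u) :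
    diagonal u * BofA u f A - BofA u f A * diagonal u
      = A * diagonal (f ∘ u) - diagonal (f ∘ u) * A := by
  ext i j
  simp only [Matrix.sub_apply, diagonal_mul, mul_diagonal, Function.comp_apply]
  by_cases hij : i = j
  · subst hij; ring
  · have hu' : u i - u j ≠ 0 := sub_ne_zero.mpr (hu.ne hij)
    simp only [BofA, Fmat, of_apply, hij, if_false]
    field_simp
    ring

theorem toC_eq_mapMatrix : toC A = Complex.ofRealHom.mapMatrix A := rfl

theorem commutator_sub_smul_diagonal_add_smul_diagonal (hu : Function.Injective u) (z : ℂ) :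
    (toC A - z • diagonal (fun k => (u k : ℂ))) *
        (toC (BofA u f A) + z • diagonal (fun k => (f (u k) : ℂ))) -
      (toC (BofA u f A) + z • diagonal (fun k => (f (u k) : ℂ))) *
        (toC A - z • diagonal (fun k => (u k : ℂ)))
      = toC (matComm A (BofA u f A)) := by
  have hdiag (v : Fin N → ℝ) : diagonal (fun k => (v k : ℂ)) = toC (diagonal v) := by
    simp [toC, diagonal_map]
  rw [commutator_sub_smul_add_smul_s9 z ?_ (commute_diagonal _ _)]
  · simp only [matComm, toC_eq_mapMatrix, map_mul, map_sub]
  · rw [hdiag, hdiag (fun k => f (u k))]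
    simp only [toC_eq_mapMatrix, ← map_mul, ← map_sub]
    exact congrArg _ (diagonal_mul_BofA_sub_BofA_mul_diagonal f A hu)

end LaxPair

/-- The coefficients of the spectral curve are integrals of motion: along any
solution of the Lax equation `Ȧ = [A, B(A)]` on an interval `I`, the characteristic
polynomial `λ ↦ det(A(t) - z M_y - λ·Id)` is independent of `t` for every `z ∈ ℂ`;
equivalently `Tr((A(t) - z M_y)^k)` is constant in `t` for every `z` and every
positive integer `k`. -/
theorem spectral_curve_invariant (N : ℕ) (u : Fin N → ℝ) (hu : StrictMono u)
    (f : ℝ → ℝ) (I : Set ℝ) (hI : I.OrdConnected)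
    (A : ℝ → Matrix (Fin N) (Fin N) ℝ)
    (hA : ∀ t ∈ I, ∀ i j, HasDerivAt (fun s => A s i j)
      (matComm (A t) (BofA u f (A t)) i j) t) :
    ∀ z : ℂ, ∀ t₁ ∈ I, ∀ t₂ ∈ I,
      (∀ lam : ℂ,
        (toC (A t₁) - z • Matrix.diagonal (fun k => (u k : ℂ)) - lam • 1).det =
        (toC (A t₂) - z • Matrix.diagonal (fun k => (u k : ℂ)) - lam • 1).det) ∧
      (∀ k : ℕ, 0 < k →
        ((toC (A t₁) - z • Matrix.diagonal (fun i => (u i : ℂ))) ^ k).trace =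
        ((toC (A t₂) - z • Matrix.diagonal (fun i => (u i : ℂ))) ^ k).trace) := by
  intro z t₁ ht₁ t₂ ht₂
  set L : ℝ → Matrix (Fin N) (Fin N) ℂ := fun s => toC (A s) - z • diagonal fun k => (u k : ℂ)
  set M : ℝ → Matrix (Fin N) (Fin N) ℂ := fun s =>
    toC (BofA u f (A s)) + z • diagonal fun k => (f (u k) : ℂ)
  have hLax : ∀ t ∈ I, HasEntrywiseDerivAt L (L t * M t - M t * L t) t := fun t ht => by
    rw [commutator_sub_smul_diagonal_add_smul_diagonal f (A t) hu.injective z]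
    exact HasEntrywiseDerivAt.sub_const (fun i j => (hA t ht i j).ofReal_comp) _
  refine ⟨fun lam => ?_, fun k _ => ?_⟩
  · exact hI.eq_of_hasDerivAt_eq_zero
      (fun t ht => ((hLax t ht).sub_smul_one_of_lax lam).hasDerivAt_det_of_lax) ht₁ ht₂
  · exact hI.eq_of_hasDerivAt_eq_zero
      (fun t ht => (hLax t ht).hasDerivAt_trace_pow_of_lax k) ht₁ ht₂
end

section
/- Convexity implies positivity of the clustering terms: let f : ℝ → ℝ be convex and u_1 < … < u_N. If A ∈ M_N(ℝ) is lower triangular with nonnegative off-diagonal entries and A_ij = 0 for a fixed pair i > j, then the (i,j) entry of the commutator satisfies [A, B(A)]_ij = Σ_{j < k < i} (F_kj − F_ik) A_ik A_kj ≥ 0, where each factor F_kj − F_ik = (f(u_i)−f(u_k))/(u_i−u_k) − (f(u_k)−f(u_j))/(u_k−u_j) is nonnegative by convexity of f. -/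
open Matrix BigOperators Finset

/-- `L` is lower triangular: `L_{ij} = 0` whenever `i < j`. -/
def lowerTri {N : ℕ} (L : Matrix (Fin N) (Fin N) ℝ) : Prop :=
  ∀ i j : Fin N, i < j → L i j = 0

/-!
Only the terms `k` with `j < k < i` survive in `(A B - B A)_{ij}`: the others contain an entry of
`A` above the diagonal or the entry `A_{ij} = 0`, which also kills `B_{ij}`, so the diagonal of `B`
never enters. Each surviving term is `(F_{kj} - F_{ik}) A_{ik} A_{kj}`, and `F_{kj} - F_{ik}` is the
difference of two adjacent chord slopes of `f` over `u_j < u_k < u_i`, nonnegative by convexity.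
-/

section Commutator

variable {n R : Type*} [Fintype n] [LinearOrder n] [CommRing R] {A B F : Matrix n n R}

theorem commutator_apply_eq_sum_of_lower_triangular (hlow : ∀ a b, a < b → A a b = 0)
    (hB : ∀ a b, a ≠ b → B a b = F a b * A a b) {i j : n} (hij : j < i) (hzero : A i j = 0) :
    (A * B - B * A) i j =
      ∑ k ∈ univ.filter (fun k => j < k ∧ k < i), (F k j - F i k) * (A i k * A k j) := by
  rw [Matrix.sub_apply, mul_apply, mul_apply, ← sum_sub_distrib, sum_filter]
  refine sum_congr rfl fun k _ => ?_
  split_ifs with hk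
  · rw [hB k j hk.1.ne', hB i k hk.2.ne']
    ring
  have hBij : B i j = 0 := by rw [hB i j hij.ne', hzero, mul_zero]
  rcases lt_trichotomy k j with hkj | rfl | hjk
  · rw [hB k j hkj.ne, hlow k j hkj]
    ring
  · rw [hzero, hBij]
    ring
  rcases lt_trichotomy k i with hki | rfl | hik
  · exact absurd ⟨hjk, hki⟩ hk
  · rw [hzero, hBij]
    ring
  · rw [hB i k hik.ne, hlow i k hik]
    ring

end Commutator

section Multipliers

variable {N : ℕ} {u : Fin N → ℝ} {f : ℝ → ℝ}

theorem Fmat_apply_of_ne {a b : Fin N} (hab : a ≠ b) :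
    Fmat u f a b = -((f (u a) - f (u b)) / (u a - u b)) := by
  simp only [Fmat, of_apply, if_neg hab]

theorem BofA_apply_of_ne (A : Matrix (Fin N) (Fin N) ℝ) {a b : Fin N} (hab : a ≠ b) :
    BofA u f A a b = Fmat u f a b * A a b := by
  simp only [BofA, of_apply, if_neg hab]

theorem Fmat_sub_Fmat_eq_slope_sub_slope {i j k : Fin N} (hkj : k ≠ j) (hik : i ≠ k) :
    Fmat u f k j - Fmat u f i k =
      (f (u i) - f (u k)) / (u i - u k) - (f (u k) - f (u j)) / (u k - u j) := by
  rw [Fmat_apply_of_ne hkj, Fmat_apply_of_ne hik]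
  ring

theorem Fmat_sub_Fmat_nonneg {s : Set ℝ} (hf : ConvexOn ℝ s f) (hus : ∀ a, u a ∈ s)
    (hu : StrictMono u) {i j k : Fin N} (hjk : j < k) (hki : k < i) :
    0 ≤ Fmat u f k j - Fmat u f i k := by
  rw [Fmat_sub_Fmat_eq_slope_sub_slope hjk.ne' hki.ne', sub_nonneg]
  exact hf.slope_mono_adjacent (hus j) (hus i) (hu hjk) (hu hki)

end Multipliers

/-- Convexity implies positivity of the clustering terms: for lower-triangular `A`
with nonnegative off-diagonal entries and `A_{ij} = 0` for a fixed `i > j`, the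
`(i,j)` entry of the commutator equals
`∑_{j < k < i} (F_{kj} - F_{ik}) A_{ik} A_{kj} ≥ 0`, with each factor
`F_{kj} - F_{ik} = (f(u_i)-f(u_k))/(u_i-u_k) - (f(u_k)-f(u_j))/(u_k-u_j)`
nonnegative by convexity of `f`. -/
theorem convexity_clustering_positive (N : ℕ) (u : Fin N → ℝ)
    (hu : StrictMono u) (f : ℝ → ℝ) (hconvex : ConvexOn ℝ Set.univ f)
    (A : Matrix (Fin N) (Fin N) ℝ)
    (hlow : lowerTri A) (hpos : ∀ i j : Fin N, i ≠ j → 0 ≤ A i j)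
    (i j : Fin N) (hij : j < i) (hzero : A i j = 0) :
    matComm A (BofA u f A) i j =
      ∑ k ∈ Finset.univ.filter (fun k => j < k ∧ k < i),
        (Fmat u f k j - Fmat u f i k) * (A i k * A k j) ∧
    0 ≤ matComm A (BofA u f A) i j ∧
    (∀ k : Fin N, j < k → k < i →
      Fmat u f k j - Fmat u f i k =
        (f (u i) - f (u k)) / (u i - u k) - (f (u k) - f (u j)) / (u k - u j) ∧
      0 ≤ Fmat u f k j - Fmat u f i k) := by
  have hsum : matComm A (BofA u f A) i j =
      ∑ k ∈ Finset.univ.filter (fun k => j < k ∧ k < i),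
        (Fmat u f k j - Fmat u f i k) * (A i k * A k j) :=
    commutator_apply_eq_sum_of_lower_triangular hlow (fun a b => BofA_apply_of_ne A) hij hzero
  have hfactor (k : Fin N) (hjk : j < k) (hki : k < i) : 0 ≤ Fmat u f k j - Fmat u f i k :=
    Fmat_sub_Fmat_nonneg hconvex (fun _ => Set.mem_univ _) hu hjk hki
  refine ⟨hsum, ?_, fun k hjk hki =>
    ⟨Fmat_sub_Fmat_eq_slope_sub_slope hjk.ne' hki.ne', hfactor k hjk hki⟩⟩
  rw [hsum]
  refine sum_nonneg fun k hk => ?_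
  obtain ⟨hjk, hki⟩ := (mem_filter.mp hk).2
  exact mul_nonneg (hfactor k hjk hki) (mul_nonneg (hpos i k hki.ne') (hpos k j hjk.ne'))
end
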